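/- arXiv:2109.07987 — 4 statements merged into one kernel-verified Lean document; each statement's English description precedes it below -/
import Mathlib

section
/- Let H and δH be Hermitian matrices in ℂ^{d×d}, ψ(0) a unit vector, and define ψ(t) = exp(-itH)ψ(0), φ(t) = exp(-it(H+δH))ψ(0), and χ(t) = φ(t) - ψ(t). Then for all Δt ≥ 0, ‖χ(Δt)‖ ≤ ∫₀^{Δt} ⟨ψ(t), δH² ψ(t)⟩^{1/2} dt. -/
/-!
Both states are Schrödinger evolutions: `φ(t) = exp(tA) ψ(0)` and `ψ(t) = exp(tB) ψ(0)` with the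
skew-adjoint generators `A = -i(H + δH)` and `B = -iH`. Differentiating
`s ↦ exp((t - s)A) exp(sB)` gives Duhamel's formula
`exp(tB) - exp(tA) = ∫₀ᵗ exp((t - s)A) (B - A) exp(sB) ds`, with `B - A = i δH`. Applied to `ψ(0)`,
the unitary factor `exp((t - s)A)` drops out of the norm, leaving `∫₀ᵗ ‖δH ψ(s)‖ ds`, and
`‖δH ψ(s)‖² = ⟨ψ(s), δH² ψ(s)⟩` since `δH` is Hermitian.
-/

noncomputable section

open scoped BigOperators

/-- Operator norm of a matrix induced by the ℓ² norm on ℂ^d. -/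
def l2opNorm {d : ℕ} (M : Matrix (Fin d) (Fin d) ℂ) : ℝ :=
  ‖Matrix.toEuclideanCLM (𝕜 := ℂ) M‖

/-- Matrix exponential. -/
def mexp {d : ℕ} (M : Matrix (Fin d) (Fin d) ℂ) : Matrix (Fin d) (Fin d) ℂ :=
  NormedSpace.exp M

open NormedSpace

section Duhamel

variable {𝔸 : Type*} [NormedRing 𝔸] [NormedAlgebra ℝ 𝔸] [CompleteSpace 𝔸]

theorem hasDerivAt_exp_sub_smul_mul_exp_smul (A B : 𝔸) (t u : ℝ) :
    HasDerivAt (fun s : ℝ => exp ((t - s) • A) * exp (s • B))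
      (exp ((t - u) • A) * (B - A) * exp (u • B)) u := by
  have hA : HasDerivAt (fun s : ℝ => exp ((t - s) • A)) (-(exp ((t - u) • A) * A)) u := by
    simpa [Function.comp_def] using
      (hasDerivAt_exp_smul_const A (t - u)).scomp u ((hasDerivAt_id u).const_sub t)
  refine (hA.mul (hasDerivAt_exp_smul_const' B u)).congr_deriv ?_
  noncomm_ring

theorem exp_smul_sub_exp_smul_eq_integral (A B : 𝔸) (t : ℝ) :
    exp (t • B) - exp (t • A) = ∫ s in 0..t, exp ((t - s) • A) * (B - A) * exp (s • B) := by
  let +nondep : NormedAlgebra ℚ 𝔸 := .restrictScalars ℚ ℝ 𝔸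
  rw [intervalIntegral.integral_eq_sub_of_hasDerivAt
    (fun u _ => hasDerivAt_exp_sub_smul_mul_exp_smul A B t u)
    (Continuous.intervalIntegrable (by fun_prop) _ _)]
  simp

end Duhamel

section SkewAdjointGenerator

variable {E : Type*} [NormedAddCommGroup E] [InnerProductSpace ℂ E] [CompleteSpace E]

theorem norm_exp_apply_of_mem_skewAdjoint {T : E →L[ℂ] E} (hT : T ∈ skewAdjoint (E →L[ℂ] E))
    (v : E) : ‖exp T v‖ = ‖v‖ :=
  let +nondep : NormedAlgebra ℚ (E →L[ℂ] E) := .restrictScalars ℚ ℂ _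
  (exp T).norm_map_of_mem_unitary (exp_mem_unitary_of_mem_skewAdjoint hT) v

theorem norm_exp_smul_apply_sub_le_integral {A : E →L[ℂ] E} (hA : A ∈ skewAdjoint (E →L[ℂ] E))
    (B : E →L[ℂ] E) (v : E) {t : ℝ} (ht : 0 ≤ t) :
    ‖exp (t • A) v - exp (t • B) v‖ ≤ ∫ s in 0..t, ‖(B - A) (exp (s • B) v)‖ := by
  let +nondep : NormedAlgebra ℚ (E →L[ℂ] E) := .restrictScalars ℚ ℂ _
  have hint : IntervalIntegrable (fun s : ℝ => exp ((t - s) • A) * (B - A) * exp (s • B))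
      MeasureTheory.volume 0 t := Continuous.intervalIntegrable (by fun_prop) _ _
  calc ‖exp (t • A) v - exp (t • B) v‖
      = ‖∫ s in 0..t, (exp ((t - s) • A) * (B - A) * exp (s • B)) v‖ := by
        rw [norm_sub_rev, ← sub_apply, exp_smul_sub_exp_smul_eq_integral,
          ContinuousLinearMap.intervalIntegral_apply hint]
    _ ≤ ∫ s in 0..t, ‖(exp ((t - s) • A) * (B - A) * exp (s • B)) v‖ :=
        intervalIntegral.norm_integral_le_integral_norm ht
    _ = ∫ s in 0..t, ‖(B - A) (exp (s • B) v)‖ :=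
        intervalIntegral.integral_congr fun s _ =>
          norm_exp_apply_of_mem_skewAdjoint (skewAdjoint.smul_mem (t - s) hA) _

end SkewAdjointGenerator

namespace Matrix

open WithLp

variable {d : ℕ}

open scoped Matrix.Norms.L2Operator in
theorem toEuclideanCLM_mexp (M : Matrix (Fin d) (Fin d) ℂ) :
    toEuclideanCLM (𝕜 := ℂ) (mexp M) = exp (toEuclideanCLM (𝕜 := ℂ) M) :=
  let +nondep : NormedAlgebra ℚ (Matrix (Fin d) (Fin d) ℂ) := .restrictScalars ℚ ℂ _
  let +nondep : NormedAlgebra ℚ (EuclideanSpace ℂ (Fin d) →L[ℂ] EuclideanSpace ℂ (Fin d)) :=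
    .restrictScalars ℚ ℂ _
  map_exp _ (AddMonoidHomClass.isometry_of_norm _ fun N => (cstar_norm_def N).symm).continuous M

theorem toLp_mexp_neg_I_mul_smul_mulVec (M : Matrix (Fin d) (Fin d) ℂ) (t : ℝ)
    (v : EuclideanSpace ℂ (Fin d)) :
    toLp 2 (mexp ((-Complex.I * t) • M) *ᵥ ofLp v)
      = exp (t • (-Complex.I • toEuclideanCLM (𝕜 := ℂ) M)) v := by
  rw [← toEuclideanCLM_toLp, toLp_ofLp, toEuclideanCLM_mexp, map_smul, mul_comm, ← smul_smul,
    Complex.coe_smul t (-Complex.I • toEuclideanCLM (𝕜 := ℂ) M)]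

theorem IsHermitian.neg_I_smul_toEuclideanCLM_mem_skewAdjoint {M : Matrix (Fin d) (Fin d) ℂ}
    (hM : M.IsHermitian) :
    -Complex.I • toEuclideanCLM (𝕜 := ℂ) M ∈ skewAdjoint (EuclideanSpace ℂ (Fin d) →L[ℂ] _) :=
  ((isHermitian_iff_isSelfAdjoint.mp hM).map _).smul_mem_skewAdjoint
    (skewAdjoint.mem_iff.mpr (by simp))

theorem IsHermitian.sqrt_re_inner_sq_mulVec {M : Matrix (Fin d) (Fin d) ℂ} (hM : M.IsHermitian)
    (v : EuclideanSpace ℂ (Fin d)) :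
    √(inner ℂ v (toLp 2 ((M ^ 2) *ᵥ ofLp v))).re = ‖toEuclideanCLM (𝕜 := ℂ) M v‖ := by
  have hself : IsSelfAdjoint (toEuclideanCLM (𝕜 := ℂ) M) :=
    (isHermitian_iff_isSelfAdjoint.mp hM).map _
  rw [ContinuousLinearMap.apply_norm_eq_sqrt_inner_adjoint_right,
    ← ContinuousLinearMap.star_eq_adjoint, hself.star_eq, ← toEuclideanCLM_toLp, toLp_ofLp,
    map_pow, sq]
  rfl

end Matrix

open Matrix in
theorem one_step_statistical_error_bound_general {d : ℕ}
    (H δH : Matrix (Fin d) (Fin d) ℂ) (hH : H.IsHermitian) (hδH : δH.IsHermitian)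
    (ψ0 : EuclideanSpace ℂ (Fin d))
    (ψ φ χ : ℝ → EuclideanSpace ℂ (Fin d))
    (hψ : ∀ t : ℝ, ψ t = (mexp ((-Complex.I * t) • H)).mulVec ψ0)
    (hφ : ∀ t : ℝ, φ t = (mexp ((-Complex.I * t) • (H + δH))).mulVec ψ0)
    (hχ : ∀ t : ℝ, χ t = φ t - ψ t)
    (Δt : ℝ) (hΔt : 0 ≤ Δt) :
    ‖χ Δt‖ ≤ ∫ t in (0 : ℝ)..Δt,
      Real.sqrt ((inner (𝕜 := ℂ) (ψ t)
        ((WithLp.toLp 2 ((δH ^ 2).mulVec (ψ t)) : EuclideanSpace ℂ (Fin d)))).re) := by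
  set A := -Complex.I • toEuclideanCLM (𝕜 := ℂ) (H + δH)
  set B := -Complex.I • toEuclideanCLM (𝕜 := ℂ) H
  have hψB : ∀ t : ℝ, ψ t = exp (t • B) ψ0 := fun t => by
    rw [← WithLp.toLp_ofLp 2 (ψ t), hψ t, toLp_mexp_neg_I_mul_smul_mulVec]
  have hφA : φ Δt = exp (Δt • A) ψ0 := by
    rw [← WithLp.toLp_ofLp 2 (φ Δt), hφ Δt, toLp_mexp_neg_I_mul_smul_mulVec]
  have hBA : B - A = Complex.I • toEuclideanCLM (𝕜 := ℂ) δH := by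
    simp only [A, B, map_add]
    module
  calc ‖χ Δt‖ = ‖exp (Δt • A) ψ0 - exp (Δt • B) ψ0‖ := by rw [hχ, hφA, hψB]
    _ ≤ ∫ t in (0 : ℝ)..Δt, ‖(B - A) (exp (t • B) ψ0)‖ :=
      norm_exp_smul_apply_sub_le_integral (hH.add hδH).neg_I_smul_toEuclideanCLM_mem_skewAdjoint
        B ψ0 hΔt
    _ = _ := intervalIntegral.integral_congr fun t _ => by
      rw [hδH.sqrt_re_inner_sq_mulVec, hψB, hBA, _root_.smul_apply, norm_smul,
        Complex.norm_I, one_mul]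

theorem one_step_statistical_error_bound {d : ℕ}
    (H δH : Matrix (Fin d) (Fin d) ℂ) (hH : H.IsHermitian) (hδH : δH.IsHermitian)
    (ψ0 : EuclideanSpace ℂ (Fin d)) (hψ0 : ‖ψ0‖ = 1)
    (ψ φ χ : ℝ → EuclideanSpace ℂ (Fin d))
    (hψ : ∀ t : ℝ, ψ t = (mexp ((-Complex.I * t) • H)).mulVec ψ0)
    (hφ : ∀ t : ℝ, φ t = (mexp ((-Complex.I * t) • (H + δH))).mulVec ψ0)
    (hχ : ∀ t : ℝ, χ t = φ t - ψ t)
    (Δt : ℝ) (hΔt : 0 ≤ Δt) :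
    ‖χ Δt‖ ≤ ∫ t in (0 : ℝ)..Δt,
      Real.sqrt ((inner (𝕜 := ℂ) (ψ t)
        ((WithLp.toLp 2 ((δH ^ 2).mulVec (ψ t)) : EuclideanSpace ℂ (Fin d)))).re) :=
  one_step_statistical_error_bound_general H δH hH hδH ψ0 ψ φ χ hψ hφ hχ Δt hΔt
end
end

section
/- Let H₀ and H₁ be Hermitian matrices in ℂ^{d×d}, ψ(0) a unit vector, and define χ(Δt) = exp(-iΔtH₀)exp(-iΔtH₁)ψ(0) - exp(-iΔt(H₀+H₁))ψ(0). Then ‖χ(Δt)‖ ≤ (Δt²/2)·‖[H₀,H₁]‖, where [H₀,H₁] = H₀H₁ - H₁H₀ and ‖·‖ is the operator norm. -/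
noncomputable section

open scoped BigOperators

/-!
Pass to the interaction picture: with the skew-adjoint `x = -iH₀`, `y = -iH₁`, the function
`G s = exp (-s(x+y)) exp (sx) exp (sy)` satisfies `G 0 = 1` and
`G' s = exp (-s(x+y)) [exp (sx), y] exp (sy)`. Exponentials of skew-adjoint elements are
unitary, so `‖G' s‖ = ‖[exp (sx), y]‖`, and the same argument applied to
`exp (-sx) y exp (sx)` bounds this by `s ‖[x, y]‖`. Integrating, `‖G t - 1‖ ≤ t² / 2 ‖[x, y]‖`,
and the Trotter error `exp (tx) exp (ty) - exp (t(x+y)) = exp (t(x+y)) (G t - 1)` has the same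
norm.
-/

open NormedSpace

theorem norm_sub_le_of_norm_deriv_le_mul_pow {E : Type*} [NormedAddCommGroup E]
    [NormedSpace ℝ E] {f f' : ℝ → E} {C t : ℝ} (n : ℕ) (ht : 0 ≤ t)
    (hf : ∀ s ∈ Set.Icc 0 t, HasDerivAt f (f' s) s)
    (bound : ∀ s ∈ Set.Ico 0 t, ‖f' s‖ ≤ C * s ^ n) :
    ‖f t - f 0‖ ≤ C * t ^ (n + 1) / (n + 1) := by
  have hB (s : ℝ) : HasDerivAt (fun s ↦ C * s ^ (n + 1) / (n + 1)) (C * s ^ n) s := by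
    refine (((hasDerivAt_pow (n + 1) s).const_mul C).div_const ((n : ℝ) + 1)).congr_deriv ?_
    push_cast
    field_simp
  refine image_norm_le_of_norm_deriv_right_le_deriv_boundary (f := fun s ↦ f s - f 0)
    (fun s hs ↦ ((hf s hs).sub_const _).continuousAt.continuousWithinAt)
    (fun s hs ↦ ((hf s (Set.Ico_subset_Icc_self hs)).sub_const _).hasDerivWithinAt)
    (by simp) hB bound ⟨ht, le_rfl⟩

section SkewAdjoint

variable {A : Type*} [NormedRing A] [NormedAlgebra ℝ A] [CompleteSpace A] [StarRing A]
  [CStarRing A] [StarModule ℝ A] {x y : A}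

theorem exp_smul_mem_unitary (hx : x ∈ skewAdjoint A) (s : ℝ) : exp (s • x) ∈ unitary A :=
  letI := NormedAlgebra.restrictScalars ℚ ℝ A
  exp_mem_unitary_of_mem_skewAdjoint (skewAdjoint.smul_mem s hx)

theorem exp_smul_mul_exp_smul_neg (hx : x ∈ skewAdjoint A) (s : ℝ) :
    exp (s • x) * exp (s • -x) = 1 := by
  have hstar : s • -x = star (s • x) := by
    rw [star_smul, star_trivial, skewAdjoint.mem_iff.mp hx]
  rw [hstar, ← star_exp]
  exact Unitary.mul_star_self_of_mem (exp_smul_mem_unitary hx s)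

theorem norm_exp_smul_mul_sub_mul_exp_smul_le (hx : x ∈ skewAdjoint A) (y : A) {s : ℝ}
    (hs : 0 ≤ s) : ‖exp (s • x) * y - y * exp (s • x)‖ ≤ s * ‖x * y - y * x‖ := by
  set M : ℝ → A := fun u ↦ exp (u • -x) * y * exp (u • x)
  have hM (u : ℝ) : HasDerivAt M (exp (u • -x) * (y * x - x * y) * exp (u • x)) u := by
    refine (((hasDerivAt_exp_smul_const (-x) u).mul_const y).mul
      (hasDerivAt_exp_smul_const' x u)).congr_deriv ?_
    noncomm_ring
  have hMs := norm_sub_le_of_norm_deriv_le_mul_pow (C := ‖x * y - y * x‖) 0 hs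
    (fun u _ ↦ hM u) fun u _ ↦ by
    rw [CStarRing.norm_mul_mem_unitary _ (exp_smul_mem_unitary hx u),
      CStarRing.norm_mem_unitary_mul _ (exp_smul_mem_unitary (neg_mem hx) u), norm_sub_rev,
      pow_zero, mul_one]
  have hfactor : exp (s • x) * y - y * exp (s • x) = exp (s • x) * (y - M s) := by
    simp only [M, mul_sub, ← mul_assoc, exp_smul_mul_exp_smul_neg hx, one_mul]
  rw [hfactor, CStarRing.norm_mem_unitary_mul _ (exp_smul_mem_unitary hx s), norm_sub_rev,
    mul_comm]
  simpa [M] using hMs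

theorem norm_exp_smul_mul_exp_smul_sub_exp_smul_add_le (hx : x ∈ skewAdjoint A)
    (hy : y ∈ skewAdjoint A) {t : ℝ} (ht : 0 ≤ t) :
    ‖exp (t • x) * exp (t • y) - exp (t • (x + y))‖ ≤ t ^ 2 / 2 * ‖x * y - y * x‖ := by
  have hxy : x + y ∈ skewAdjoint A := add_mem hx hy
  set G : ℝ → A := fun s ↦ exp (s • -(x + y)) * (exp (s • x) * exp (s • y))
  have hG (s : ℝ) : HasDerivAt G
      (exp (s • -(x + y)) * ((exp (s • x) * y - y * exp (s • x)) * exp (s • y))) s := by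
    have hcomm : exp (s • y) * y = y * exp (s • y) := ((Commute.refl y).smul_left s).exp_left
    refine ((hasDerivAt_exp_smul_const _ s).mul ((hasDerivAt_exp_smul_const' x s).mul
      (hasDerivAt_exp_smul_const y s))).congr_deriv ?_
    simp only [Pi.mul_apply, hcomm]
    noncomm_ring
  have hGt := norm_sub_le_of_norm_deriv_le_mul_pow (C := ‖x * y - y * x‖) 1 ht
    (fun s _ ↦ hG s) fun s hs ↦ by
    rw [CStarRing.norm_mem_unitary_mul _ (exp_smul_mem_unitary (neg_mem hxy) s),
      CStarRing.norm_mul_mem_unitary _ (exp_smul_mem_unitary hy s), pow_one, mul_comm]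
    exact norm_exp_smul_mul_sub_mul_exp_smul_le hx y hs.1
  have hfactor : exp (t • x) * exp (t • y) - exp (t • (x + y))
      = exp (t • (x + y)) * (G t - G 0) := by
    simp only [G, zero_smul, exp_zero, mul_one, mul_sub, ← mul_assoc,
      exp_smul_mul_exp_smul_neg hxy, one_mul]
  rw [hfactor, CStarRing.norm_mem_unitary_mul _ (exp_smul_mem_unitary hxy t)]
  convert hGt using 1
  ring

end SkewAdjoint

open Complex in
theorem IsSelfAdjoint.norm_exp_mul_exp_sub_exp_add_le {A : Type*} [CStarAlgebra A] {a b : A}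
    (ha : IsSelfAdjoint a) (hb : IsSelfAdjoint b) {t : ℝ} (ht : 0 ≤ t) :
    ‖NormedSpace.exp ((-I * t) • a) * NormedSpace.exp ((-I * t) • b)
      - NormedSpace.exp ((-I * t) • (a + b))‖
      ≤ t ^ 2 / 2 * ‖a * b - b * a‖ := by
  have hI : -I ∈ skewAdjoint ℂ := by simp [skewAdjoint.mem_iff, Complex.conj_I]
  have hsmul (c : A) : (-I * t) • c = t • (-I) • c := by
    rw [mul_comm, mul_smul, Complex.coe_smul]
  have hcomm : (-I) • a * (-I) • b - (-I) • b * (-I) • a = -(a * b - b * a) := by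
    simp only [smul_mul_smul_comm, neg_mul_neg, I_mul_I, neg_one_smul, neg_sub_neg, neg_sub]
  rw [hsmul, hsmul, hsmul, smul_add, ← norm_neg (a * b - b * a), ← hcomm]
  exact norm_exp_smul_mul_exp_smul_sub_exp_smul_add_le (ha.smul_mem_skewAdjoint hI)
    (hb.smul_mem_skewAdjoint hI) ht

-- Under the scoped L² operator norm instances, `l2opNorm` and `mexp` are definitionally the norm
-- and the exponential of the C⋆-algebra `Matrix (Fin d) (Fin d) ℂ`.
open Complex in
open scoped Matrix.Norms.L2Operator in
theorem Matrix.IsHermitian.l2opNorm_mexp_mul_mexp_sub_mexp_add_le {d : ℕ}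
    {H₀ H₁ : Matrix (Fin d) (Fin d) ℂ} (hH₀ : H₀.IsHermitian) (hH₁ : H₁.IsHermitian)
    {t : ℝ} (ht : 0 ≤ t) :
    l2opNorm (mexp ((-I * t) • H₀) * mexp ((-I * t) • H₁) - mexp ((-I * t) • (H₀ + H₁)))
      ≤ t ^ 2 / 2 * l2opNorm (H₀ * H₁ - H₁ * H₀) :=
  IsSelfAdjoint.norm_exp_mul_exp_sub_exp_add_le hH₀.isSelfAdjoint hH₁.isSelfAdjoint ht

theorem trotter_splitting_error_bound {d : ℕ}
    (H₀ H₁ : Matrix (Fin d) (Fin d) ℂ) (hH₀ : H₀.IsHermitian) (hH₁ : H₁.IsHermitian)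
    (ψ0 : EuclideanSpace ℂ (Fin d)) (hψ0 : ‖ψ0‖ = 1)
    (Δt : ℝ) (hΔt : 0 ≤ Δt)
    (χ : EuclideanSpace ℂ (Fin d))
    (hχ : χ = (mexp ((-Complex.I * Δt) • H₀) * mexp ((-Complex.I * Δt) • H₁)).mulVec ψ0
            - (mexp ((-Complex.I * Δt) • (H₀ + H₁))).mulVec ψ0) :
    ‖χ‖ ≤ Δt ^ 2 / 2 * l2opNorm (H₀ * H₁ - H₁ * H₀) := by
  set E := mexp ((-Complex.I * Δt) • H₀) * mexp ((-Complex.I * Δt) • H₁)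
    - mexp ((-Complex.I * Δt) • (H₀ + H₁))
  have hχE : χ = Matrix.toEuclideanCLM (𝕜 := ℂ) E ψ0 := by
    apply WithLp.ofLp_injective
    rw [Matrix.ofLp_toEuclideanCLM, Matrix.sub_mulVec, hχ]
  calc ‖χ‖ ≤ l2opNorm E * ‖ψ0‖ := hχE ▸ ContinuousLinearMap.le_opNorm _ _
    _ = l2opNorm E := by rw [hψ0, mul_one]
    _ ≤ Δt ^ 2 / 2 * l2opNorm (H₀ * H₁ - H₁ * H₀) :=
      hH₀.l2opNorm_mexp_mul_mexp_sub_mexp_add_le hH₁ hΔt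
end
end

section
/- Let H₀, H₁ be Hermitian matrices, δH a Hermitian random matrix with ‖E[δH²]‖ ≤ Λ, and ψ(0) a unit vector. Define χ(Δt) = exp(-iΔtH₀)exp(-iΔt(H₁+δH))ψ(0) - exp(-iΔt(H₀+H₁))ψ(0). Then E[⟨χ(Δt),χ(Δt)⟩] ≤ 2ΛΔt² + Δt⁴·‖[H₀,H₁]‖². -/
/-!
Write `A = -i H₀`, `B = -i H₁`, `C = -i δH`; these are skew-adjoint, so `exp (s • ·)` of each of
them and of their sums is unitary. The error splits as
`e^{tA}(e^{t(B+C)} - e^{tB})ψ + (e^{tA}e^{tB} - e^{t(A+B)})ψ`, and each difference is the integral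
of the derivative of an interpolating path (Duhamel's formula) whose integrand, up to unitary
factors, is `C e^{sB}ψ`, resp. `e^{sA}Be^{sB}ψ - Be^{sA}e^{sB}ψ`. The latter is at most
`s‖[A,B]‖` by the same argument applied to `u ↦ e^{uA}Be^{(s-u)A}`, giving the bias `t²/2‖[H₀,H₁]‖`.
After `(a+b)² ≤ 2a² + 2b²`, Cauchy–Schwarz in `s` and
`E‖δH φ‖² = re⟪E[δH²] φ, φ⟫ ≤ Λ` for the unit vectors `φ = e^{sB}ψ` bound the noise term by `ΛΔt²`.
-/

noncomputable section

open scoped BigOperators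

open NormedSpace intervalIntegral

theorem norm_sub_le_integral_of_hasDerivAt {F : Type*} [NormedAddCommGroup F] [NormedSpace ℝ F]
    [CompleteSpace F] {f f' : ℝ → F} {c : ℝ → ℝ} {t : ℝ} (ht : 0 ≤ t)
    (hf : ∀ s ∈ Set.uIcc 0 t, HasDerivAt f (f' s) s) (hf' : Continuous f')
    (hc : Continuous c) (hle : ∀ s ∈ Set.Icc 0 t, ‖f' s‖ ≤ c s) :
    ‖f t - f 0‖ ≤ ∫ s in 0..t, c s := by
  rw [← integral_eq_sub_of_hasDerivAt hf (hf'.intervalIntegrable 0 t)]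
  exact (norm_integral_le_integral_norm ht).trans <|
    integral_mono_on ht (hf'.norm.intervalIntegrable 0 t) (hc.intervalIntegrable 0 t) hle

section BanachSpace

variable {E : Type*} [NormedAddCommGroup E] [NormedSpace ℂ E]

-- `NormedSpace.exp` is built from a `ℚ`-algebra structure, which Mathlib does not put on operators.
instance ContinuousLinearMap.instNormedAlgebraRat : NormedAlgebra ℚ (E →L[ℂ] E) :=
  .restrictScalars ℚ ℂ _

theorem exp_smul_apply_comm (A : E →L[ℂ] E) (r : ℝ) (x : E) :
    exp (r • A) (A x) = A (exp (r • A) x) :=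
  DFunLike.congr_fun ((Commute.refl A).smul_left r).exp_left.eq x

variable [CompleteSpace E]

theorem hasDerivAt_exp_smul_apply (A : E →L[ℂ] E) {φ : ℝ → ℝ} {φ' : ℝ} {g : ℝ → E} {g' : E}
    {s : ℝ} (hφ : HasDerivAt φ φ' s) (hg : HasDerivAt g g' s) :
    HasDerivAt (fun s => exp (φ s • A) (g s)) (exp (φ s • A) (φ' • A (g s) + g')) s := by
  have hexp := (hasDerivAt_exp_smul_const A (φ s)).scomp s hφ
  refine (((ContinuousLinearMap.restrictScalarsL ℂ E E ℝ ℝ).hasFDerivAt.comp_hasDerivAt s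
    hexp).clm_apply hg).congr_deriv ?_
  change (φ' • (exp (φ s • A) * A)) (g s) + exp (φ s • A) g' = _
  rw [smul_apply, mul_apply_eq_comp, map_add, ContinuousLinearMap.map_smul_of_tower]

theorem hasDerivAt_exp_smul_apply_const (A : E →L[ℂ] E) (v : E) (s : ℝ) :
    HasDerivAt (fun s : ℝ => exp (s • A) v) (A (exp (s • A) v)) s := by
  simpa [exp_smul_apply_comm] using
    hasDerivAt_exp_smul_apply A (hasDerivAt_id s) (hasDerivAt_const s v)

theorem hasDerivAt_exp_sub_smul_apply (A : E →L[ℂ] E) (t : ℝ) {g : ℝ → E} {g' : E} {s : ℝ}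
    (hg : HasDerivAt g g' s) :
    HasDerivAt (fun s => exp ((t - s) • A) (g s)) (exp ((t - s) • A) (g' - A (g s))) s := by
  simpa [sub_eq_neg_add] using
    hasDerivAt_exp_smul_apply A ((hasDerivAt_id s).const_sub t) hg

end BanachSpace

section HilbertSpace

variable {E : Type*} [NormedAddCommGroup E] [InnerProductSpace ℂ E] [CompleteSpace E]

theorem norm_exp_smul_apply_of_mem_skewAdjoint {A : E →L[ℂ] E}
    (hA : A ∈ skewAdjoint (E →L[ℂ] E)) (r : ℝ) (v : E) : ‖exp (r • A) v‖ = ‖v‖ :=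
  ContinuousLinearMap.norm_map_of_mem_unitary
    (exp_mem_unitary_of_mem_skewAdjoint (𝔸 := E →L[ℂ] E) (skewAdjoint.smul_mem r hA)) v

variable {A : E →L[ℂ] E}

theorem norm_exp_smul_apply_sub_le (hA : A ∈ skewAdjoint (E →L[ℂ] E)) (B : E →L[ℂ] E) (v : E)
    {t : ℝ} (ht : 0 ≤ t) :
    ‖exp (t • B) v - exp (t • A) v‖ ≤ ∫ s in 0..t, ‖(B - A) (exp (s • B) v)‖ := by
  have hf : ∀ s ∈ Set.uIcc 0 t, HasDerivAt (fun s => exp ((t - s) • A) (exp (s • B) v))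
      (exp ((t - s) • A) ((B - A) (exp (s • B) v))) s := fun s _ => by
    simpa using hasDerivAt_exp_sub_smul_apply A t (hasDerivAt_exp_smul_apply_const B v s)
  simpa using norm_sub_le_integral_of_hasDerivAt ht hf (by fun_prop) (by fun_prop)
    fun s _ => (norm_exp_smul_apply_of_mem_skewAdjoint hA _ _).le

theorem norm_exp_smul_apply_comm_sub_le (hA : A ∈ skewAdjoint (E →L[ℂ] E)) (B : E →L[ℂ] E)
    (x : E) {s : ℝ} (hs : 0 ≤ s) :
    ‖exp (s • A) (B x) - B (exp (s • A) x)‖ ≤ s * ‖A * B - B * A‖ * ‖x‖ := by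
  have hf : ∀ u ∈ Set.uIcc 0 s, HasDerivAt (fun u => exp (u • A) (B (exp ((s - u) • A) x)))
      (exp (u • A) ((A * B - B * A) (exp ((s - u) • A) x))) u := fun u _ => by
    have hg := (B.restrictScalars ℝ).hasFDerivAt.comp_hasDerivAt u
      (hasDerivAt_exp_sub_smul_apply A s (hasDerivAt_const u x))
    refine (hasDerivAt_exp_smul_apply A (hasDerivAt_id u) hg).congr_deriv ?_
    simp [mul_apply_eq_comp, exp_smul_apply_comm, sub_eq_add_neg]
  have hle : ∀ u ∈ Set.Icc 0 s,
      ‖exp (u • A) ((A * B - B * A) (exp ((s - u) • A) x))‖ ≤ ‖A * B - B * A‖ * ‖x‖ :=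
    fun u _ => by
      rw [norm_exp_smul_apply_of_mem_skewAdjoint hA]
      exact ((A * B - B * A).le_opNorm _).trans_eq <| by
        rw [norm_exp_smul_apply_of_mem_skewAdjoint hA]
  convert norm_sub_le_integral_of_hasDerivAt hs hf (by fun_prop) continuous_const hle using 1
  · simp
  · rw [integral_const, smul_eq_mul, sub_zero]; ring

theorem norm_exp_smul_exp_smul_apply_sub_le {B : E →L[ℂ] E} (hA : A ∈ skewAdjoint (E →L[ℂ] E))
    (hB : B ∈ skewAdjoint (E →L[ℂ] E)) (v : E) {t : ℝ} (ht : 0 ≤ t) :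
    ‖exp (t • A) (exp (t • B) v) - exp (t • (A + B)) v‖ ≤
      t ^ 2 / 2 * ‖A * B - B * A‖ * ‖v‖ := by
  have hf : ∀ s ∈ Set.uIcc 0 t,
      HasDerivAt (fun s => exp ((t - s) • (A + B)) (exp (s • A) (exp (s • B) v)))
        (exp ((t - s) • (A + B))
          (exp (s • A) (B (exp (s • B) v)) - B (exp (s • A) (exp (s • B) v)))) s := fun s _ => by
    refine (hasDerivAt_exp_sub_smul_apply (A + B) t (hasDerivAt_exp_smul_apply A
      (hasDerivAt_id s) (hasDerivAt_exp_smul_apply_const B v s))).congr_deriv ?_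
    simp only [id, one_smul, map_add, add_apply, exp_smul_apply_comm]
    abel_nf
  have hle : ∀ s ∈ Set.Icc 0 t, ‖exp ((t - s) • (A + B))
      (exp (s • A) (B (exp (s • B) v)) - B (exp (s • A) (exp (s • B) v)))‖ ≤
        s * ‖A * B - B * A‖ * ‖v‖ := fun s hs => by
    rw [norm_exp_smul_apply_of_mem_skewAdjoint (add_mem hA hB)]
    exact (norm_exp_smul_apply_comm_sub_le hA B _ hs.1).trans_eq <| by
      rw [norm_exp_smul_apply_of_mem_skewAdjoint hB]
  convert norm_sub_le_integral_of_hasDerivAt ht hf (by fun_prop) (by fun_prop) hle using 1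
  · simp
  · rw [integral_mul_const, integral_mul_const, integral_id]; ring

theorem norm_exp_smul_exp_smul_add_apply_sub_le {B C : E →L[ℂ] E}
    (hA : A ∈ skewAdjoint (E →L[ℂ] E)) (hB : B ∈ skewAdjoint (E →L[ℂ] E))
    (hC : C ∈ skewAdjoint (E →L[ℂ] E)) (v : E) {t : ℝ} (ht : 0 ≤ t) :
    ‖exp (t • A) (exp (t • (B + C)) v) - exp (t • (A + B)) v‖ ≤
      (∫ s in 0..t, ‖C (exp (s • B) v)‖) + t ^ 2 / 2 * ‖A * B - B * A‖ * ‖v‖ := by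
  have hsplit : exp (t • A) (exp (t • (B + C)) v) - exp (t • (A + B)) v =
      exp (t • A) (exp (t • (B + C)) v - exp (t • B) v) +
        (exp (t • A) (exp (t • B) v) - exp (t • (A + B)) v) := by
    rw [map_sub]; abel
  have hnoise : ‖exp (t • (B + C)) v - exp (t • B) v‖ ≤ ∫ s in 0..t, ‖C (exp (s • B) v)‖ := by
    rw [norm_sub_rev]
    simpa using norm_exp_smul_apply_sub_le (add_mem hB hC) B v ht
  rw [hsplit]
  refine (norm_add_le _ _).trans (add_le_add ?_ (norm_exp_smul_exp_smul_apply_sub_le hA hB v ht))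
  rwa [norm_exp_smul_apply_of_mem_skewAdjoint hA]

theorem sum_mul_norm_sq_apply_le {Ω : Type*} [Fintype Ω] (w : Ω → ℝ) {D : Ω → E →L[ℂ] E}
    (hD : ∀ ω, IsSelfAdjoint (D ω)) (x : E) :
    ∑ ω, w ω * ‖D ω x‖ ^ 2 ≤ ‖∑ ω, (w ω : ℂ) • D ω ^ 2‖ * ‖x‖ ^ 2 := by
  have hterm : ∀ ω, w ω * ‖D ω x‖ ^ 2 = (inner ℂ (((w ω : ℂ) • D ω ^ 2) x) x).re :=
    fun ω => by
      rw [smul_apply, inner_smul_left, sq (D ω), mul_apply_eq_comp,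
        show inner ℂ (D ω (D ω x)) x = inner ℂ (D ω x) (D ω x) from (hD ω).isSymmetric _ _,
        Complex.conj_ofReal, Complex.re_ofReal_mul]
      exact congrArg _ (inner_self_eq_norm_sq (𝕜 := ℂ) _).symm
  calc ∑ ω, w ω * ‖D ω x‖ ^ 2 = (inner ℂ ((∑ ω, (w ω : ℂ) • D ω ^ 2) x) x).re := by
        simp only [hterm, sum_apply, sum_inner, Complex.re_sum]
    _ ≤ ‖(∑ ω, (w ω : ℂ) • D ω ^ 2) x‖ * ‖x‖ := re_inner_le_norm (𝕜 := ℂ) _ _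
    _ ≤ ‖∑ ω, (w ω : ℂ) • D ω ^ 2‖ * ‖x‖ * ‖x‖ := by gcongr; exact ContinuousLinearMap.le_opNorm _ _
    _ = ‖∑ ω, (w ω : ℂ) • D ω ^ 2‖ * ‖x‖ ^ 2 := by ring

end HilbertSpace

theorem sq_intervalIntegral_le_mul_intervalIntegral_sq {f : ℝ → ℝ} (hf : Continuous f) {t : ℝ}
    (ht : 0 ≤ t) :
    (∫ s in 0..t, f s) ^ 2 ≤ t * ∫ s in 0..t, f s ^ 2 := by
  set I := ∫ s in 0..t, f s
  have hexpand : ∫ s in 0..t, (t * f s - I) ^ 2 = t * (t * ∫ s in 0..t, f s ^ 2) - t * I ^ 2 := by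
    have hf1 : IntervalIntegrable f MeasureTheory.volume 0 t := hf.intervalIntegrable 0 t
    have hf2 : IntervalIntegrable (f · ^ 2) MeasureTheory.volume 0 t :=
      (hf.pow 2).intervalIntegrable 0 t
    have hsq : (fun s => (t * f s - I) ^ 2) =
        fun s => t ^ 2 * f s ^ 2 - 2 * t * I * f s + I ^ 2 := by
      ext s; ring
    rw [hsq, integral_add ((hf2.const_mul _).sub (hf1.const_mul _)) intervalIntegrable_const,
      integral_sub (hf2.const_mul _) (hf1.const_mul _), integral_const_mul, integral_const_mul,
      integral_const]
    simp only [smul_eq_mul, sub_zero]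
    ring
  have hnonneg : 0 ≤ t * ((t * ∫ s in 0..t, f s ^ 2) - I ^ 2) := by
    rw [mul_sub, ← hexpand]
    exact integral_nonneg ht fun s _ => sq_nonneg _
  rcases ht.eq_or_lt with rfl | htpos
  · simp [I]
  · linarith [nonneg_of_mul_nonneg_right hnonneg htpos]

theorem sum_mul_sq_intervalIntegral_le {Ω : Type*} [Fintype Ω] {w : Ω → ℝ}
    (hw : ∀ ω, 0 ≤ w ω) {f : Ω → ℝ → ℝ} (hf : ∀ ω, Continuous (f ω)) {Λ t : ℝ} (ht : 0 ≤ t)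
    (hΛ : ∀ s, ∑ ω, w ω * f ω s ^ 2 ≤ Λ) :
    ∑ ω, w ω * (∫ s in 0..t, f ω s) ^ 2 ≤ Λ * t ^ 2 :=
  calc ∑ ω, w ω * (∫ s in 0..t, f ω s) ^ 2
      ≤ ∑ ω, w ω * (t * ∫ s in 0..t, f ω s ^ 2) :=
        Finset.sum_le_sum fun ω _ =>
          mul_le_mul_of_nonneg_left
            (sq_intervalIntegral_le_mul_intervalIntegral_sq (hf ω) ht) (hw ω)
    _ = t * ∫ s in 0..t, ∑ ω, w ω * f ω s ^ 2 := by
        rw [integral_finsetSum (f := fun ω s => w ω * f ω s ^ 2)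
          fun ω _ => ((hf ω).pow 2).intervalIntegrable 0 t |>.const_mul _, Finset.mul_sum]
        simp_rw [integral_const_mul]
        exact Finset.sum_congr rfl fun ω _ => by ring
    _ ≤ t * ∫ _ in 0..t, Λ := by
        gcongr
        exact integral_mono_on ht (Continuous.intervalIntegrable (by fun_prop) 0 t)
          intervalIntegrable_const fun s _ => hΛ s
    _ = Λ * t ^ 2 := by rw [integral_const, smul_eq_mul, sub_zero]; ring

theorem sum_mul_sq_le_of_le_add {Ω : Type*} [Fintype Ω] {w x a : Ω → ℝ} {b : ℝ}
    (hw : ∀ ω, 0 ≤ w ω) (hw₁ : ∑ ω, w ω = 1) (hx : ∀ ω, 0 ≤ x ω) (hxa : ∀ ω, x ω ≤ a ω + b) :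
    ∑ ω, w ω * x ω ^ 2 ≤ 2 * ∑ ω, w ω * a ω ^ 2 + 2 * b ^ 2 :=
  calc ∑ ω, w ω * x ω ^ 2 ≤ ∑ ω, (2 * (w ω * a ω ^ 2) + 2 * b ^ 2 * w ω) :=
        Finset.sum_le_sum fun ω _ => by
          have hsq : x ω ^ 2 ≤ (a ω + b) ^ 2 := pow_le_pow_left₀ (hx ω) (hxa ω) 2
          nlinarith [hw ω, sq_nonneg (a ω - b)]
    _ = 2 * ∑ ω, w ω * a ω ^ 2 + 2 * b ^ 2 := by
        rw [Finset.sum_add_distrib, ← Finset.mul_sum, ← Finset.mul_sum, hw₁, mul_one]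

section Matrix

variable {d : ℕ}

local notation "Φ" => Matrix.toEuclideanCLM (n := Fin d) (𝕜 := ℂ)

theorem toEuclideanCLM_mexp (M : Matrix (Fin d) (Fin d) ℂ) : Φ (mexp M) = exp (Φ M) :=
  open scoped Matrix.Norms.Operator in
  map_exp Φ (LinearMap.continuous_of_finiteDimensional (StarAlgEquiv.toAlgEquiv Φ).toLinearMap) M

theorem toEuclideanCLM_mexp_neg_I_mul_smul (M : Matrix (Fin d) (Fin d) ℂ) (t : ℝ) :
    Φ (mexp ((-Complex.I * t) • M)) = exp (t • (-Complex.I • Φ M)) := by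
  rw [toEuclideanCLM_mexp, mul_comm, mul_smul, map_smul, map_smul]
  exact congrArg exp (RCLike.real_smul_eq_coe_smul (K := ℂ)
    (E := EuclideanSpace ℂ (Fin d) →L[ℂ] EuclideanSpace ℂ (Fin d)) t _).symm

theorem neg_I_smul_toEuclideanCLM_mem_skewAdjoint {H : Matrix (Fin d) (Fin d) ℂ}
    (hH : H.IsHermitian) :
    -Complex.I • Φ H ∈ skewAdjoint (EuclideanSpace ℂ (Fin d) →L[ℂ] EuclideanSpace ℂ (Fin d)) :=
  (hH.isSelfAdjoint.map Φ).smul_mem_skewAdjoint (by simp [skewAdjoint.mem_iff])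

theorem norm_neg_I_smul_commutator (X Y : Matrix (Fin d) (Fin d) ℂ) :
    ‖(-Complex.I • Φ X) * (-Complex.I • Φ Y) - (-Complex.I • Φ Y) * (-Complex.I • Φ X)‖ =
      l2opNorm (X * Y - Y * X) := by
  rw [l2opNorm, ← norm_neg, map_sub, map_mul, map_mul]
  congr 1
  simp only [smul_mul_smul_comm, neg_mul_neg, Complex.I_mul_I]
  module

theorem norm_trotter_error_le {H₀ H₁ V : Matrix (Fin d) (Fin d) ℂ} (hH₀ : H₀.IsHermitian)
    (hH₁ : H₁.IsHermitian) (hV : V.IsHermitian) {ψ χ : EuclideanSpace ℂ (Fin d)} {t : ℝ}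
    (ht : 0 ≤ t) (hχ : χ.ofLp =
      (mexp ((-Complex.I * t) • H₀) * mexp ((-Complex.I * t) • (H₁ + V))).mulVec ψ
      - (mexp ((-Complex.I * t) • (H₀ + H₁))).mulVec ψ) :
    ‖χ‖ ≤ (∫ s in 0..t, ‖Φ V (exp (s • (-Complex.I • Φ H₁)) ψ)‖) +
      t ^ 2 / 2 * l2opNorm (H₀ * H₁ - H₁ * H₀) * ‖ψ‖ := by
  have hχ' : χ =
      exp (t • (-Complex.I • Φ H₀)) (exp (t • (-Complex.I • Φ H₁ + -Complex.I • Φ V)) ψ) -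
        exp (t • (-Complex.I • Φ H₀ + -Complex.I • Φ H₁)) ψ := by
    apply WithLp.ofLp_injective 2
    rw [hχ, WithLp.ofLp_sub, ← mul_apply_eq_comp, ← Matrix.ofLp_toEuclideanCLM,
      ← Matrix.ofLp_toEuclideanCLM, map_mul, toEuclideanCLM_mexp_neg_I_mul_smul,
      toEuclideanCLM_mexp_neg_I_mul_smul, toEuclideanCLM_mexp_neg_I_mul_smul, map_add, map_add,
      smul_add (-Complex.I), smul_add (-Complex.I)]
  have h := norm_exp_smul_exp_smul_add_apply_sub_le
    (neg_I_smul_toEuclideanCLM_mem_skewAdjoint hH₀) (neg_I_smul_toEuclideanCLM_mem_skewAdjoint hH₁)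
    (neg_I_smul_toEuclideanCLM_mem_skewAdjoint hV) ψ ht
  rw [← hχ', norm_neg_I_smul_commutator] at h
  simpa only [_root_.smul_apply, norm_smul, norm_neg, Complex.norm_I, one_mul] using h

theorem sum_mul_norm_sq_toEuclideanCLM_apply_le {Ω : Type*} [Fintype Ω] (w : Ω → ℝ)
    {V : Ω → Matrix (Fin d) (Fin d) ℂ} (hV : ∀ ω, (V ω).IsHermitian)
    (x : EuclideanSpace ℂ (Fin d)) :
    ∑ ω, w ω * ‖Φ (V ω) x‖ ^ 2 ≤ l2opNorm (∑ ω, (w ω : ℂ) • V ω ^ 2) * ‖x‖ ^ 2 := by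
  simpa only [l2opNorm, map_sum, map_smul, map_pow] using
    sum_mul_norm_sq_apply_le w (fun ω => (hV ω).isSelfAdjoint.map Φ) x

end Matrix

theorem one_step_mse_bias_variance_bound {d : ℕ} {Ω : Type*} [Fintype Ω]
    (w : Ω → ℝ) (hw : ∀ ω, 0 ≤ w ω) (hwsum : ∑ ω, w ω = 1)
    (H₀ H₁ : Matrix (Fin d) (Fin d) ℂ) (hH₀ : H₀.IsHermitian) (hH₁ : H₁.IsHermitian)
    (δH : Ω → Matrix (Fin d) (Fin d) ℂ) (hδH : ∀ ω, (δH ω).IsHermitian)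
    (Λ : ℝ) (hΛ : l2opNorm (∑ ω, (w ω : ℂ) • (δH ω) ^ 2) ≤ Λ)
    (ψ0 : EuclideanSpace ℂ (Fin d)) (hψ0 : ‖ψ0‖ = 1)
    (Δt : ℝ) (hΔt : 0 ≤ Δt)
    (χ : Ω → EuclideanSpace ℂ (Fin d))
    (hχ : ∀ ω, χ ω =
      (mexp ((-Complex.I * Δt) • H₀) * mexp ((-Complex.I * Δt) • (H₁ + δH ω))).mulVec ψ0
      - (mexp ((-Complex.I * Δt) • (H₀ + H₁))).mulVec ψ0) :
    (∑ ω, w ω * (inner (𝕜 := ℂ) (χ ω) (χ ω)).re) ≤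
      2 * Λ * Δt ^ 2 + Δt ^ 4 * (l2opNorm (H₀ * H₁ - H₁ * H₀)) ^ 2 := by
  set B := -Complex.I • Matrix.toEuclideanCLM (𝕜 := ℂ) H₁
  set K := l2opNorm (H₀ * H₁ - H₁ * H₀)
  set a := fun ω => ∫ s in 0..Δt, ‖Matrix.toEuclideanCLM (𝕜 := ℂ) (δH ω) (exp (s • B) ψ0)‖
  have hbias : ∀ ω, ‖χ ω‖ ≤ a ω + Δt ^ 2 / 2 * K := fun ω => by
    simpa only [hψ0, mul_one] using norm_trotter_error_le hH₀ hH₁ (hδH ω) hΔt (hχ ω)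
  have hvar : ∑ ω, w ω * a ω ^ 2 ≤ Λ * Δt ^ 2 :=
    sum_mul_sq_intervalIntegral_le hw (fun ω => by fun_prop) hΔt fun s => by
      have h := sum_mul_norm_sq_toEuclideanCLM_apply_le w hδH (exp (s • B) ψ0)
      rw [norm_exp_smul_apply_of_mem_skewAdjoint (neg_I_smul_toEuclideanCLM_mem_skewAdjoint hH₁),
        hψ0, one_pow, mul_one] at h
      exact h.trans hΛ
  calc ∑ ω, w ω * (inner ℂ (χ ω) (χ ω)).re = ∑ ω, w ω * ‖χ ω‖ ^ 2 :=
        Finset.sum_congr rfl fun ω _ => congrArg _ (inner_self_eq_norm_sq (𝕜 := ℂ) (χ ω))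
    _ ≤ 2 * ∑ ω, w ω * a ω ^ 2 + 2 * (Δt ^ 2 / 2 * K) ^ 2 :=
        sum_mul_sq_le_of_le_add hw hwsum (fun ω => norm_nonneg _) hbias
    _ ≤ 2 * Λ * Δt ^ 2 + Δt ^ 4 * K ^ 2 := by nlinarith [sq_nonneg (Δt ^ 2 * K)]
end
end

section
/- Let δH be a Hermitian random matrix with ‖δH‖ ≤ Γ almost surely and ‖E[δH²]‖ ≤ Λ, H₀, H₁ Hermitian, ψ(0) a unit vector, and χ(Δt) = exp(-iΔtH₀)exp(-iΔt(H₁+δH))ψ(0) - exp(-iΔt(H₀+H₁))ψ(0). Then almost surely ⟨χ(Δt),χ(Δt)⟩^{1/2} ≤ Δt·Γ + (Δt²/2)·‖[H₀,H₁]‖. -/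
noncomputable section

open scoped BigOperators

/-!
Write the generators as skew-adjoint elements `X = -iH₀`, `Y = -iH₁`, `Z = -iδH` of a C⋆-algebra,
so that every `exp (s • W)` with `W` among `X`, `Y`, `X + Y`, `Y + Z` is unitary, hence a
contraction. The error operator splits as
`exp (tX) (exp (t(Y + Z)) - exp (tY)) + (exp (tX) exp (tY) - exp (t(X + Y)))`.
Duhamel's formula bounds the first term by `t ‖Z‖`. For the second, `s ↦ exp ((t - s)(X + Y))
exp (sX) exp (sY)` has derivative `exp ((t - s)(X + Y)) [exp (sX), Y] exp (sY)`, of norm at most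
`s ‖[X, Y]‖` by Duhamel again, and integrating this gives `t² / 2 ‖[X, Y]‖`.
-/

section ContractionSemigroup

open NormedSpace Set

variable {A : Type*} [NormedRing A]

lemma norm_mul_mul_le_of_norm_le_one {a b : A} (ha : ‖a‖ ≤ 1) (hb : ‖b‖ ≤ 1) (m : A) :
    ‖a * m * b‖ ≤ ‖m‖ :=
  calc ‖a * m * b‖ ≤ ‖a‖ * ‖m‖ * ‖b‖ := norm_mul₃_le
    _ ≤ 1 * ‖m‖ * 1 := by gcongr
    _ = ‖m‖ := by ring

variable [NormedAlgebra ℝ A]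

def GeneratesContractionSemigroup (X : A) : Prop :=
  ∀ s : ℝ, 0 ≤ s → ‖exp (s • X)‖ ≤ 1

variable [CompleteSpace A]

/-- Duhamel: `s ↦ exp (sX) C exp ((t - s)Y)` has derivative `exp (sX) (XC - CY) exp ((t - s)Y)`. -/
theorem norm_exp_smul_mul_sub_mul_exp_smul_le_s11 {X Y : A} (hX : GeneratesContractionSemigroup X)
    (hY : GeneratesContractionSemigroup Y) (C : A) {t : ℝ} (ht : 0 ≤ t) :
    ‖exp (t • X) * C - C * exp (t • Y)‖ ≤ t * ‖X * C - C * Y‖ := by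
  have hderiv (s : ℝ) : HasDerivAt (fun u => exp (u • X) * C * exp ((t - u) • Y))
      (exp (s • X) * (X * C - C * Y) * exp ((t - s) • Y)) s := by
    refine (((hasDerivAt_exp_smul_const X s).mul_const C).mul
      ((hasDerivAt_exp_smul_const' Y (t - s)).comp_const_sub t s)).congr_deriv ?_
    noncomm_ring
  have hbound : ∀ s ∈ Ico 0 t, ‖exp (s • X) * (X * C - C * Y) * exp ((t - s) • Y)‖ ≤
      ‖X * C - C * Y‖ := fun s hs =>
    norm_mul_mul_le_of_norm_le_one (hX s hs.1) (hY _ (sub_nonneg.2 hs.2.le)) _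
  have := norm_image_sub_le_of_norm_deriv_le_segment'
    (fun s _ => (hderiv s).hasDerivWithinAt) hbound t (right_mem_Icc.2 ht)
  simpa [mul_comm] using this

theorem norm_exp_smul_sub_exp_smul_le {X Y : A} (hX : GeneratesContractionSemigroup X)
    (hY : GeneratesContractionSemigroup Y) {t : ℝ} (ht : 0 ≤ t) :
    ‖exp (t • X) - exp (t • Y)‖ ≤ t * ‖X - Y‖ := by
  simpa using norm_exp_smul_mul_sub_mul_exp_smul_le_s11 hX hY 1 ht

theorem norm_exp_smul_mul_exp_smul_sub_exp_smul_add_le_s11 {X Y : A}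
    (hX : GeneratesContractionSemigroup X) (hY : GeneratesContractionSemigroup Y)
    (hXY : GeneratesContractionSemigroup (X + Y)) {t : ℝ} (ht : 0 ≤ t) :
    ‖exp (t • X) * exp (t • Y) - exp (t • (X + Y))‖ ≤ t ^ 2 / 2 * ‖X * Y - Y * X‖ := by
  set g : ℝ → A := fun u => exp ((t - u) • (X + Y)) * (exp (u • X) * exp (u • Y))
  set g' : ℝ → A := fun u =>
    exp ((t - u) • (X + Y)) * (exp (u • X) * Y - Y * exp (u • X)) * exp (u • Y)
  have hderiv (s : ℝ) : HasDerivAt g (g' s) s := by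
    refine (((hasDerivAt_exp_smul_const (X + Y) (t - s)).comp_const_sub t s).mul
      ((hasDerivAt_exp_smul_const' X s).mul (hasDerivAt_exp_smul_const' Y s))).congr_deriv ?_
    simp only [g', Pi.mul_apply]
    noncomm_ring
  have hbound : ∀ s ∈ Ico 0 t, ‖g' s‖ ≤ s * ‖X * Y - Y * X‖ := fun s hs =>
    (norm_mul_mul_le_of_norm_le_one (hXY _ (sub_nonneg.2 hs.2.le)) (hY s hs.1) _).trans
      (norm_exp_smul_mul_sub_mul_exp_smul_le_s11 hX hX Y hs.1)
  have hB (s : ℝ) : HasDerivAt (fun u => u ^ 2 / 2 * ‖X * Y - Y * X‖) (s * ‖X * Y - Y * X‖) s := by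
    simpa using ((hasDerivAt_pow 2 s).div_const 2).mul_const ‖X * Y - Y * X‖
  have := image_norm_le_of_norm_deriv_right_le_deriv_boundary (f := fun u => g u - g 0)
    (fun s _ => ((hderiv s).sub_const (g 0)).continuousAt.continuousWithinAt)
    (fun s _ => ((hderiv s).sub_const (g 0)).hasDerivWithinAt) (by simp) hB hbound
    (right_mem_Icc.2 ht)
  simpa [g] using this

theorem norm_exp_smul_mul_exp_smul_add_sub_exp_smul_add_le {X Y Z : A}
    (hX : GeneratesContractionSemigroup X) (hY : GeneratesContractionSemigroup Y)
    (hYZ : GeneratesContractionSemigroup (Y + Z)) (hXY : GeneratesContractionSemigroup (X + Y))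
    {t : ℝ} (ht : 0 ≤ t) :
    ‖exp (t • X) * exp (t • (Y + Z)) - exp (t • (X + Y))‖ ≤
      t * ‖Z‖ + t ^ 2 / 2 * ‖X * Y - Y * X‖ := by
  have hperturb : ‖exp (t • X) * (exp (t • (Y + Z)) - exp (t • Y))‖ ≤ t * ‖Z‖ := by
    simpa using norm_mul_le_of_le (hX t ht) (norm_exp_smul_sub_exp_smul_le hYZ hY ht)
  calc ‖exp (t • X) * exp (t • (Y + Z)) - exp (t • (X + Y))‖
      = ‖exp (t • X) * (exp (t • (Y + Z)) - exp (t • Y)) +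
          (exp (t • X) * exp (t • Y) - exp (t • (X + Y)))‖ := by noncomm_ring
    _ ≤ t * ‖Z‖ + t ^ 2 / 2 * ‖X * Y - Y * X‖ :=
      (norm_add_le _ _).trans
        (add_le_add hperturb (norm_exp_smul_mul_exp_smul_sub_exp_smul_add_le_s11 hX hY hXY ht))

end ContractionSemigroup

section CStarAlgebra

open NormedSpace

lemma CStarRing.norm_le_one_of_mem_unitary {E : Type*} [NormedRing E] [StarRing E] [CStarRing E]
    {U : E} (hU : U ∈ unitary E) : ‖U‖ ≤ 1 := by
  rcases subsingleton_or_nontrivial E with hE | hE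
  · simp [Subsingleton.elim U 0]
  · exact (norm_of_mem_unitary hU).le

variable {A : Type*} [CStarAlgebra A]

lemma generatesContractionSemigroup_of_mem_skewAdjoint {X : A} (hX : X ∈ skewAdjoint A) :
    GeneratesContractionSemigroup X := fun s _ =>
  let +nondep : NormedAlgebra ℚ A := .restrictScalars ℚ ℂ A
  CStarRing.norm_le_one_of_mem_unitary
    (exp_mem_unitary_of_mem_skewAdjoint (skewAdjoint.smul_mem s hX))

theorem norm_exp_mul_exp_sub_exp_le_of_isSelfAdjoint {a b e : A} (ha : IsSelfAdjoint a)
    (hb : IsSelfAdjoint b) (he : IsSelfAdjoint e) {t : ℝ} (ht : 0 ≤ t) :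
    ‖exp ((-Complex.I * t) • a) * exp ((-Complex.I * t) • (b + e)) -
        exp ((-Complex.I * t) • (a + b))‖ ≤ t * ‖e‖ + t ^ 2 / 2 * ‖a * b - b * a‖ := by
  have hI : -Complex.I ∈ skewAdjoint ℂ := (skewAdjoint ℂ).neg_mem Complex.conj_I
  have hgen {c : A} (hc : IsSelfAdjoint c) : GeneratesContractionSemigroup (-Complex.I • c) :=
    generatesContractionSemigroup_of_mem_skewAdjoint (hc.smul_mem_skewAdjoint hI)
  have hsmul (c : A) : (-Complex.I * t) • c = t • (-Complex.I • c) := by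
    rw [mul_comm, ← smul_smul, Complex.coe_smul]
  have hcomm : ‖(-Complex.I • a) * (-Complex.I • b) - (-Complex.I • b) * (-Complex.I • a)‖ =
      ‖a * b - b * a‖ := by
    simp only [smul_mul_smul_comm, ← smul_sub, norm_smul]
    simp
  have hnorm : ‖-Complex.I • e‖ = ‖e‖ := by simp [norm_smul]
  have hgen_add {c c' : A} (hc : IsSelfAdjoint c) (hc' : IsSelfAdjoint c') :
      GeneratesContractionSemigroup (-Complex.I • c + -Complex.I • c') :=
    smul_add (-Complex.I) c c' ▸ hgen (hc.add hc')
  rw [hsmul, hsmul, hsmul, smul_add (-Complex.I) b e, smul_add (-Complex.I) a b, ← hcomm,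
    ← hnorm]
  exact norm_exp_smul_mul_exp_smul_add_sub_exp_smul_add_le (hgen ha) (hgen hb)
    (hgen_add hb he) (hgen_add ha hb) ht

end CStarAlgebra

section MatrixL2

open scoped Matrix.Norms.L2Operator

/- Under the L² operator norm instances, `l2opNorm` is the C⋆-norm of matrices and `mexp` is
`NormedSpace.exp`, both definitionally. -/
theorem l2opNorm_mexp_mul_mexp_sub_mexp_le {d : ℕ} {H₀ H₁ δ : Matrix (Fin d) (Fin d) ℂ}
    (hH₀ : H₀.IsHermitian) (hH₁ : H₁.IsHermitian) (hδ : δ.IsHermitian) {t : ℝ} (ht : 0 ≤ t) :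
    l2opNorm (mexp ((-Complex.I * t) • H₀) * mexp ((-Complex.I * t) • (H₁ + δ)) -
        mexp ((-Complex.I * t) • (H₀ + H₁))) ≤
      t * l2opNorm δ + t ^ 2 / 2 * l2opNorm (H₀ * H₁ - H₁ * H₀) :=
  norm_exp_mul_exp_sub_exp_le_of_isSelfAdjoint hH₀.isSelfAdjoint hH₁.isSelfAdjoint
    hδ.isSelfAdjoint ht

theorem norm_toLp_mulVec_le_l2opNorm_mul {d : ℕ} (M : Matrix (Fin d) (Fin d) ℂ)
    (ψ : EuclideanSpace ℂ (Fin d)) :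
    ‖(EuclideanSpace.equiv (Fin d) ℂ).symm (M.mulVec ψ)‖ ≤ l2opNorm M * ‖ψ‖ :=
  M.l2_opNorm_mulVec ψ

end MatrixL2

theorem one_step_almost_sure_error_bound_general {d : ℕ} {Ω : Type*}
    (H₀ H₁ : Matrix (Fin d) (Fin d) ℂ) (hH₀ : H₀.IsHermitian) (hH₁ : H₁.IsHermitian)
    (δH : Ω → Matrix (Fin d) (Fin d) ℂ) (hδH : ∀ ω, (δH ω).IsHermitian)
    (Γ : ℝ) (hΓ : ∀ ω, l2opNorm (δH ω) ≤ Γ)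
    (ψ0 : EuclideanSpace ℂ (Fin d)) (hψ0 : ‖ψ0‖ = 1)
    (Δt : ℝ) (hΔt : 0 ≤ Δt)
    (χ : Ω → EuclideanSpace ℂ (Fin d))
    (hχ : ∀ ω, χ ω =
      (mexp ((-Complex.I * Δt) • H₀) * mexp ((-Complex.I * Δt) • (H₁ + δH ω))).mulVec ψ0
      - (mexp ((-Complex.I * Δt) • (H₀ + H₁))).mulVec ψ0) :
    ∀ ω, Real.sqrt ((inner (𝕜 := ℂ) (χ ω) (χ ω)).re) ≤
      Δt * Γ + Δt ^ 2 / 2 * l2opNorm (H₀ * H₁ - H₁ * H₀) := by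
  intro ω
  set E := mexp ((-Complex.I * Δt) • H₀) * mexp ((-Complex.I * Δt) • (H₁ + δH ω)) -
    mexp ((-Complex.I * Δt) • (H₀ + H₁))
  have hχE : χ ω = (EuclideanSpace.equiv (Fin d) ℂ).symm (E.mulVec ψ0) :=
    WithLp.ofLp_injective 2 ((hχ ω).trans (Matrix.sub_mulVec _ _ _).symm)
  calc Real.sqrt ((inner (𝕜 := ℂ) (χ ω) (χ ω)).re) = ‖χ ω‖ :=
        (norm_eq_sqrt_re_inner (𝕜 := ℂ) _).symm
    _ ≤ l2opNorm E := by
      simpa [hχE, hψ0] using norm_toLp_mulVec_le_l2opNorm_mul E ψ0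
    _ ≤ Δt * l2opNorm (δH ω) + Δt ^ 2 / 2 * l2opNorm (H₀ * H₁ - H₁ * H₀) :=
      l2opNorm_mexp_mul_mexp_sub_mexp_le hH₀ hH₁ (hδH ω) hΔt
    _ ≤ Δt * Γ + Δt ^ 2 / 2 * l2opNorm (H₀ * H₁ - H₁ * H₀) := by
      gcongr
      exact hΓ ω

theorem one_step_almost_sure_error_bound {d : ℕ} {Ω : Type*} [Fintype Ω]
    (w : Ω → ℝ) (hw : ∀ ω, 0 ≤ w ω) (hwsum : ∑ ω, w ω = 1)
    (H₀ H₁ : Matrix (Fin d) (Fin d) ℂ) (hH₀ : H₀.IsHermitian) (hH₁ : H₁.IsHermitian)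
    (δH : Ω → Matrix (Fin d) (Fin d) ℂ) (hδH : ∀ ω, (δH ω).IsHermitian)
    (Γ : ℝ) (hΓ : ∀ ω, l2opNorm (δH ω) ≤ Γ)
    (Λ : ℝ) (hΛ : l2opNorm (∑ ω, (w ω : ℂ) • (δH ω) ^ 2) ≤ Λ)
    (ψ0 : EuclideanSpace ℂ (Fin d)) (hψ0 : ‖ψ0‖ = 1)
    (Δt : ℝ) (hΔt : 0 ≤ Δt)
    (χ : Ω → EuclideanSpace ℂ (Fin d))
    (hχ : ∀ ω, χ ω =
      (mexp ((-Complex.I * Δt) • H₀) * mexp ((-Complex.I * Δt) • (H₁ + δH ω))).mulVec ψ0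
      - (mexp ((-Complex.I * Δt) • (H₀ + H₁))).mulVec ψ0) :
    ∀ ω, Real.sqrt ((inner (𝕜 := ℂ) (χ ω) (χ ω)).re) ≤
      Δt * Γ + Δt ^ 2 / 2 * l2opNorm (H₀ * H₁ - H₁ * H₀) :=
  one_step_almost_sure_error_bound_general H₀ H₁ hH₀ hH₁ δH hδH Γ hΓ ψ0 hψ0 Δt hΔt χ hχ
end
end
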